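/- arXiv:2004.00838 — 2 statements merged into one kernel-verified Lean document; each statement's English description precedes it below -/
import Mathlib

section
/- For every i ∈ Z_N and every v ∈ B_N = F_2^N, the coordinate functions of the Boolean average satisfy Bav_N^i(Btr(v)) = Bav_N^{⟨i−1⟩_N}(v); hence every coordinate function Bav_N^i is obtained from Bav_N^0 by a cyclic change of variables. -/
/-!
`Bav v` is the indicator of the set of entries of `Iav (BtoI v)`. Since `rot` only permutes
entries, this is the set of averages `av(a_k, a_{k+1})` of cyclically consecutive elements of the
support of `v` (or the support itself if it has at most one element), and an increasing tuple is
determined by its set of entries. `Btr` shifts the support by one, so its increasing enumeration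
is `tr a`, or `rot (tr a)` when `N - 1` lies in the support. As `av` commutes with translation
modulo `N`, the set of averages is shifted by one as well.
-/

namespace Rhythm

/-- `a +_N b`, addition on `Z_N = {0,…,N−1}`. -/
def addN (N a b : ℕ) : ℕ := (a + b) % N

/-- `a −_N b`, subtraction on `Z_N = {0,…,N−1}`. -/
def subN (N a b : ℕ) : ℕ := (a + N - b) % N

/-- The discrete average `av(a,b) = a +_N ⌊(b −_N a)/2⌋`. -/
def av (N a b : ℕ) : ℕ := addN N a (subN N b a / 2)

/-- The cyclic interval `[a,b]_{Z_N}`. -/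
def cyclicIcc (N a b : ℕ) : Finset ℕ :=
  if a ≤ b then Finset.Icc a b else Finset.Icc a (N - 1) ∪ Finset.Icc 0 b

/-- The half-open cyclic interval `[a,b)_{Z_N} = [a,b]_{Z_N} \ {b}`. -/
def cyclicIco (N a b : ℕ) : Finset ℕ := (cyclicIcc N a b).erase b

/-- The half-open cyclic interval `(a,b]_{Z_N} = [a,b]_{Z_N} \ {a}`. -/
def cyclicIoc (N a b : ℕ) : Finset ℕ := (cyclicIcc N a b).erase a

/-- Cyclic successor `⟨i+1⟩_n` on `Fin n`. -/
def csucc {n : ℕ} (i : Fin n) : Fin n := ⟨(i.val + 1) % n, Nat.mod_lt _ i.pos⟩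

/-- Cyclic predecessor `⟨i−1⟩_n` on `Fin n`. -/
def cpred {n : ℕ} (i : Fin n) : Fin n := ⟨(i.val + (n - 1)) % n, Nat.mod_lt _ i.pos⟩

/-- `a ∈ R_N^n`: entries in `Z_N`, pairwise distinct, and `Σ_i (a_{⟨i+1⟩_n} −_N a_i) = N`. -/
def IsRhythm (N : ℕ) {n : ℕ} (a : Fin n → ℕ) : Prop :=
  (∀ i, a i < N) ∧ Function.Injective a ∧ (∑ i, subN N (a (csucc i)) (a i)) = N

/-- The discrete average transformation `Rav`. -/
def Rav (N : ℕ) {n : ℕ} (a : Fin n → ℕ) : Fin n → ℕ := fun i => av N (a i) (a (csucc i))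

/-- The rotation `rot(a_0,…,a_{n−1}) = (a_{n−1},a_0,…,a_{n−2})`. -/
def rot {n : ℕ} (a : Fin n → ℕ) : Fin n → ℕ := fun i => a (cpred i)

/-- The translation `tr(a_0,…,a_{n−1}) = (a_0 +_N 1,…,a_{n−1} +_N 1)`. -/
def tr (N : ℕ) {n : ℕ} (a : Fin n → ℕ) : Fin n → ℕ := fun i => addN N (a i) 1

/-- `j` is the jumping number of `a`: `a_{⟨j−1⟩_n} > a_j` and `a_{⟨k−1⟩_n} < a_k` for `k ≠ j`. -/
def IsJump {n : ℕ} (a : Fin n → ℕ) (j : Fin n) : Prop :=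
  a (cpred j) > a j ∧ ∀ k, k ≠ j → a (cpred k) < a k

/-- The map `Iav`: for `n ≥ 2` it is `Rav` if `a` is proper (`N − a_{n−1} > a_0`) and
`rot ∘ Rav` otherwise; for `n ≤ 1` it is the identity. -/
def Iav (N : ℕ) {n : ℕ} (a : Fin n → ℕ) : Fin n → ℕ :=
  if h : 2 ≤ n then
    if N - a ⟨n - 1, by omega⟩ > a ⟨0, by omega⟩ then Rav N a else rot (Rav N a)
  else a

/-- The support of a Boolean vector `v ∈ F_2^N`. -/
def supp (N : ℕ) (v : Fin N → ZMod 2) : Finset (Fin N) :=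
  Finset.univ.filter fun i => v i = 1

/-- `BtoI(v)`: the increasing enumeration of the support of `v`. -/
def BtoI (N : ℕ) (v : Fin N → ZMod 2) : Fin (supp N v).card → ℕ :=
  fun i => (((supp N v).orderIsoOfFin rfl) i).1.val

/-- `ItoB(b)`: the characteristic vector of the set of entries of the tuple `b`. -/
def ItoB (N : ℕ) {n : ℕ} (b : Fin n → ℕ) : Fin N → ZMod 2 :=
  fun i => if ∃ k, b k = i.val then 1 else 0

/-- The Boolean average `Bav = ItoB ∘ Iav ∘ BtoI : B_N → B_N`. -/
def Bav (N : ℕ) (v : Fin N → ZMod 2) : Fin N → ZMod 2 :=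
  ItoB N (Iav N (BtoI N v))

/-- The cyclic shift `Btr(v_0,…,v_{N−1}) = (v_{N−1},v_0,…,v_{N−2})`. -/
def Btr (N : ℕ) (v : Fin N → ZMod 2) : Fin N → ZMod 2 := fun i => v (cpred i)

/-- `Par_N`: the set of parental pairs of zero, i.e. pairs `(a,b) ∈ Z_N × Z_N` with `av(a,b) = 0`. -/
def Par (N : ℕ) : Finset (ℕ × ℕ) :=
  (Finset.range N ×ˢ Finset.range N).filter fun p => av N p.1 p.2 = 0

/-- The least absolute remainder `φ_N(i) ∈ Z_{N,±}` of `i ∈ Z_N`. -/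
def toSigned (N : ℕ) (i : Fin N) : ℤ :=
  if (i : ℕ) ≤ N / 2 then (i : ℤ) else (i : ℤ) - N

/-- `G_N(y) = Bav_N^0(v)` where `v_{⟨j⟩_N} = 1 + y_j` for `j ∈ Z_{N,±}`. -/
def G (N : ℕ) (y : ℤ → ZMod 2) : ZMod 2 :=
  if h : 0 < N then Bav N (fun i => 1 + y (toSigned N i)) ⟨0, h⟩ else 0

lemma cpred_csucc {n : ℕ} (i : Fin n) : cpred (csucc i) = i := by
  ext
  simp only [cpred, csucc, Nat.mod_add_mod]
  rw [show i.val + 1 + (n - 1) = i.val + n by have := i.pos; omega, Nat.add_mod_right,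
    Nat.mod_eq_of_lt i.isLt]

lemma csucc_cpred {n : ℕ} (i : Fin n) : csucc (cpred i) = i := by
  ext
  simp only [cpred, csucc, Nat.mod_add_mod]
  rw [show i.val + (n - 1) + 1 = i.val + n by have := i.pos; omega, Nat.add_mod_right,
    Nat.mod_eq_of_lt i.isLt]

lemma cpred_val {n : ℕ} (k : Fin n) :
    (cpred k).val = if k.val = 0 then n - 1 else k.val - 1 := by
  have := k.isLt
  simp only [cpred]
  split_ifs with h
  · rw [h, Nat.zero_add, Nat.mod_eq_of_lt (by omega)]
  · rw [show k.val + (n - 1) = k.val - 1 + n by omega, Nat.add_mod_right,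
      Nat.mod_eq_of_lt (by omega)]

lemma addN_one_eq_iff {N x : ℕ} (hx : x < N) (i : Fin N) : addN N x 1 = i ↔ x = cpred i := by
  let y : Fin N := ⟨x, hx⟩
  change (csucc y).val = i ↔ y.val = (cpred i).val
  rw [Fin.val_inj, Fin.val_inj]
  exact ⟨fun h => h ▸ (cpred_csucc y).symm, fun h => h ▸ csucc_cpred i⟩

lemma mem_image_addN_one_iff {N : ℕ} {T : Set ℕ} (hT : ∀ x ∈ T, x < N) (i : Fin N) :
    (i : ℕ) ∈ (addN N · 1) '' T ↔ (cpred i : ℕ) ∈ T := by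
  constructor
  · rintro ⟨x, hx, h⟩
    rwa [(addN_one_eq_iff (hT x hx) i).1 h] at hx
  · intro h
    exact ⟨_, h, (addN_one_eq_iff (hT _ h) i).2 rfl⟩

lemma subN_eq_emod {N x y : ℕ} (hy : y ≤ x + N) : (subN N x y : ℤ) = (x - y) % N := by
  rw [subN, Int.natCast_mod, Nat.cast_sub hy, Nat.cast_add, add_sub_right_comm, Int.add_emod_right]

lemma subN_add_mod {N x y : ℕ} (c : ℕ) (hy : y < N) :
    subN N ((x + c) % N) ((y + c) % N) = subN N x y := by
  have hN : 0 < N := by omega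
  have hyc : (y + c) % N < N := Nat.mod_lt _ hN
  zify
  rw [subN_eq_emod (by omega), subN_eq_emod (by omega)]
  push_cast
  rw [← Int.sub_emod, add_sub_add_right_eq_sub]

lemma av_add_mod {N a b : ℕ} (c : ℕ) (ha : a < N) :
    av N ((a + c) % N) ((b + c) % N) = addN N (av N a b) c := by
  simp only [av, addN, subN_add_mod c ha, Nat.mod_add_mod]
  ring_nf

lemma av_lt {N : ℕ} (a b : ℕ) (hN : 0 < N) : av N a b < N := Nat.mod_lt _ hN

section Tuples

variable {n : ℕ}

lemma range_rot (a : Fin n → ℕ) : Set.range (rot a) = Set.range a :=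
  Function.Surjective.range_comp (fun k => ⟨csucc k, cpred_csucc k⟩) a

lemma range_tr (N : ℕ) (a : Fin n → ℕ) :
    Set.range (tr N a) = (addN N · 1) '' Set.range a :=
  Set.range_comp (fun x => addN N x 1) a

lemma Rav_rot (N : ℕ) (a : Fin n → ℕ) : Rav N (rot a) = rot (Rav N a) := by
  funext i
  simp only [Rav, rot, cpred_csucc, csucc_cpred]

lemma Rav_tr {N : ℕ} {a : Fin n → ℕ} (ha : ∀ k, a k < N) : Rav N (tr N a) = tr N (Rav N a) :=
  funext fun i => av_add_mod 1 (ha i)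

lemma range_Iav (N : ℕ) (a : Fin n → ℕ) :
    Set.range (Iav N a) = if 2 ≤ n then Set.range (Rav N a) else Set.range a := by
  unfold Iav
  split_ifs <;> simp only [range_rot]

lemma Iav_lt {N : ℕ} {a : Fin n → ℕ} (ha : ∀ k, a k < N) (k : Fin n) : Iav N a k < N := by
  have hN : 0 < N := (Nat.zero_le _).trans_lt (ha k)
  unfold Iav
  split_ifs
  exacts [av_lt _ _ hN, av_lt _ _ hN, ha k]

lemma range_Iav_rot (N : ℕ) (a : Fin n → ℕ) : Set.range (Iav N (rot a)) = Set.range (Iav N a) := by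
  simp only [range_Iav, Rav_rot, range_rot]

lemma range_Iav_tr {N : ℕ} {a : Fin n → ℕ} (ha : ∀ k, a k < N) :
    Set.range (Iav N (tr N a)) = (addN N · 1) '' Set.range (Iav N a) := by
  simp only [range_Iav, Rav_tr ha, range_tr]
  split_ifs <;> rfl

lemma strictMono_tr {N : ℕ} {a : Fin n → ℕ} (ha : StrictMono a) (hlt : ∀ k, a k + 1 < N) :
    StrictMono (tr N a) := by
  intro j k hjk
  simp only [tr, addN, Nat.mod_eq_of_lt (hlt _)]
  exact Nat.succ_lt_succ (ha hjk)

/- `tr` moves the entry `N - 1` of `a` to `0` at the end of the tuple; `rot` brings it to the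
front. -/
lemma strictMono_rot_tr {N : ℕ} {a : Fin n → ℕ} (ha : StrictMono a) (hlt : ∀ k, a k < N)
    (hmax : N - 1 ∈ Set.range a) : StrictMono (rot (tr N a)) := by
  intro j k hjk
  have hjk' : j.val < k.val := hjk
  have hn : 0 < n := k.pos
  set last : Fin n := ⟨n - 1, by omega⟩
  have hbelow : ∀ x : Fin n, x.val < n - 1 → a x + 1 < N := fun x hx =>
    Nat.lt_of_lt_of_le (Nat.succ_lt_succ (ha (show x < last from hx))) (hlt last)
  have hq : a (cpred k) + 1 < N := hbelow _ (by rw [cpred_val, if_neg (by omega)]; omega)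
  simp only [rot, tr, addN, Nat.mod_eq_of_lt hq]
  by_cases hj : j.val = 0
  · obtain ⟨y, hy⟩ := hmax
    have hylast : a y ≤ a last := ha.monotone (show y.val ≤ n - 1 by omega)
    have hlastN := hlt last
    have hp : cpred j = last := Fin.ext (by rw [cpred_val, if_pos hj])
    rw [hp, show a last + 1 = N by omega, Nat.mod_self]
    omega
  · have hpq : cpred j < cpred k := by
      change (cpred j).val < (cpred k).val
      rw [cpred_val, cpred_val, if_neg hj, if_neg (by omega)]
      omega
    rw [Nat.mod_eq_of_lt (Nat.lt_trans (Nat.succ_lt_succ (ha hpq)) hq)]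
    exact Nat.succ_lt_succ (ha hpq)

lemma range_Iav_congr (N : ℕ) {m : ℕ} {a : Fin m → ℕ} {b : Fin n → ℕ} (ha : StrictMono a)
    (hb : StrictMono b) (h : Set.range a = Set.range b) :
    Set.range (Iav N a) = Set.range (Iav N b) := by
  obtain rfl : m = n := by
    simpa only [Set.ncard_range_of_injective ha.injective,
      Set.ncard_range_of_injective hb.injective, Nat.card_eq_fintype_card, Fintype.card_fin]
      using congrArg Set.ncard h
  rw [(ha.range_inj hb).1 h]

end Tuples

lemma strictMono_BtoI (N : ℕ) (v : Fin N → ZMod 2) : StrictMono (BtoI N v) :=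
  fun _ _ h => ((supp N v).orderIsoOfFin rfl).strictMono h

lemma BtoI_lt (N : ℕ) (v : Fin N → ZMod 2) (k : Fin (supp N v).card) : BtoI N v k < N :=
  (((supp N v).orderIsoOfFin rfl) k).1.isLt

lemma range_BtoI (N : ℕ) (v : Fin N → ZMod 2) :
    Set.range (BtoI N v) = Fin.val '' (supp N v : Set (Fin N)) := by
  rw [← (supp N v).range_orderEmbOfFin rfl, ← Set.range_comp]
  rfl

lemma supp_Btr (N : ℕ) (v : Fin N → ZMod 2) : supp N (Btr N v) = (supp N v).image csucc := by
  ext i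
  simp only [supp, Finset.mem_filter, Finset.mem_image, Finset.mem_univ, true_and]
  refine ⟨fun h => ⟨cpred i, h, csucc_cpred i⟩, ?_⟩
  rintro ⟨j, hj, rfl⟩
  change v (cpred (csucc j)) = 1
  rwa [cpred_csucc]

lemma range_BtoI_Btr (N : ℕ) (v : Fin N → ZMod 2) :
    Set.range (BtoI N (Btr N v)) = (addN N · 1) '' Set.range (BtoI N v) := by
  rw [range_BtoI, range_BtoI, supp_Btr, Finset.coe_image, Set.image_image, Set.image_image]
  rfl

lemma range_Iav_BtoI_Btr (N : ℕ) (v : Fin N → ZMod 2) :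
    Set.range (Iav N (BtoI N (Btr N v))) = (addN N · 1) '' Set.range (Iav N (BtoI N v)) := by
  have hmono := strictMono_BtoI N v
  have hlt := BtoI_lt N v
  rw [← range_Iav_tr hlt]
  by_cases hmax : N - 1 ∈ Set.range (BtoI N v)
  · rw [← range_Iav_rot N (tr N (BtoI N v))]
    exact range_Iav_congr N (strictMono_BtoI N _) (strictMono_rot_tr hmono hlt hmax)
      (by rw [range_BtoI_Btr, range_rot, range_tr])
  · have hlt' : ∀ k, BtoI N v k + 1 < N := fun k => by
      have := hlt k
      have : BtoI N v k ≠ N - 1 := fun h => hmax ⟨k, h⟩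
      omega
    exact range_Iav_congr N (strictMono_BtoI N _) (strictMono_tr hmono hlt')
      (by rw [range_BtoI_Btr, range_tr])

lemma ItoB_apply (N : ℕ) {n : ℕ} (b : Fin n → ℕ) (i : Fin N) :
    ItoB N b i = if (i : ℕ) ∈ Set.range b then 1 else 0 := by
  simp only [ItoB, Set.mem_range]

lemma range_Iav_BtoI_lt (N : ℕ) (v : Fin N → ZMod 2) :
    ∀ x ∈ Set.range (Iav N (BtoI N v)), x < N := by
  rintro _ ⟨k, rfl⟩
  exact Iav_lt (BtoI_lt N v) k

end Rhythm

open Rhythm in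
theorem Bav_coord_Btr_general (N : ℕ) (i : Fin N) (v : Fin N → ZMod 2) :
    Bav N (Btr N v) i = Bav N v (cpred i) := by
  simp only [Bav, ItoB_apply, range_Iav_BtoI_Btr, mem_image_addN_one_iff (range_Iav_BtoI_lt N v)]

open Rhythm in
/-- For every `i ∈ Z_N` and every `v ∈ B_N = F_2^N`, the coordinate functions of the Boolean
average satisfy `Bav_N^i(Btr(v)) = Bav_N^{⟨i−1⟩_N}(v)`: every coordinate function is obtained
from `Bav_N^0` by a cyclic change of variables. -/
theorem Bav_coord_Btr (N : ℕ) (hN : 3 ≤ N) (i : Fin N) (v : Fin N → ZMod 2) :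
    Bav N (Btr N v) i = Bav N v (cpred i) :=
  Bav_coord_Btr_general N i v
end

section
/- The set Par_N = {(a,b) ∈ Z_N × Z_N : av(a,b) = 0} of parental pairs of zero is exactly the disjoint union of the two families {(⟨−k⟩_N, k) : 0 ≤ k ≤ ⌊(N−1)/2⌋} and {(⟨−k⟩_N, k+1) : 0 ≤ k ≤ ⌊(N−2)/2⌋} (where ⟨−k⟩_N = 0 for k = 0 and ⟨−k⟩_N = N − k for k ≥ 1); in particular Par_N has exactly N elements. -/
/-!
Write `d = b −_N a`. Since `a + ⌊d/2⌋ < 2N`, `av(a,b) = 0` means `a + ⌊d/2⌋ ∈ {0, N}`: either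
`a = 0` and `b ≤ 1`, or `b < a`, so that `d = b + N − a`, and then `a + b ∈ {N, N + 1}`.
The two families are told apart by `a + b` being `0` or `1` modulo `N`.
-/

namespace Rhythm

def ParEven (N : ℕ) : Finset (ℕ × ℕ) :=
  (Finset.range ((N - 1) / 2 + 1)).image fun k => ((N - k) % N, k)

def ParOdd (N : ℕ) : Finset (ℕ × ℕ) :=
  (Finset.range ((N - 2) / 2 + 1)).image fun k => ((N - k) % N, k + 1)

lemma mod_eq_zero_iff_of_lt_two_mul {x N : ℕ} (h : x < 2 * N) :
    x % N = 0 ↔ x = 0 ∨ x = N := by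
  constructor
  · intro hx
    obtain ⟨c, rfl⟩ := Nat.dvd_of_mod_eq_zero hx
    have hc : c < 2 := by nlinarith
    interval_cases c <;> simp
  · rintro (rfl | rfl) <;> simp

lemma self_sub_mod_eq_ite {N k : ℕ} (hk : k < N) :
    (N - k) % N = if k = 0 then 0 else N - k := by
  split_ifs with h
  · simp [h]
  · exact Nat.mod_eq_of_lt (by omega)

lemma subN_eq_ite {N a b : ℕ} (ha : a < N) (hb : b < N) :
    subN N b a = if a ≤ b then b - a else b + N - a := by
  unfold subN
  split_ifs with hab
  · rw [show b + N - a = b - a + N by omega, Nat.add_mod_right, Nat.mod_eq_of_lt (by omega)]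
  · exact Nat.mod_eq_of_lt (by omega)

theorem av_eq_zero_iff {N a b : ℕ} (ha : a < N) (hb : b < N) :
    av N a b = 0 ↔ (a = 0 ∧ b ≤ 1) ∨ (b < a ∧ (a + b = N ∨ a + b = N + 1)) := by
  have hsub := subN_eq_ite ha hb
  have hlt : subN N b a < N := Nat.mod_lt _ (by omega)
  rw [av, addN, mod_eq_zero_iff_of_lt_two_mul (by omega)]
  split_ifs at hsub <;> omega

theorem Par_eq_union {N : ℕ} (hN : 2 ≤ N) : Par N = ParEven N ∪ ParOdd N := by
  ext ⟨a, b⟩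
  simp only [Par, ParEven, ParOdd, Finset.mem_filter, Finset.mem_product, Finset.mem_range,
    Finset.mem_union, Finset.mem_image, Prod.mk.injEq]
  constructor
  · rintro ⟨⟨ha, hb⟩, h⟩
    rcases (av_eq_zero_iff ha hb).1 h with ⟨rfl, hb1⟩ | ⟨hba, hab | hab⟩
    · rcases Nat.le_one_iff_eq_zero_or_eq_one.1 hb1 with rfl | rfl
      · exact Or.inl ⟨0, by omega, by simp, rfl⟩
      · exact Or.inr ⟨0, by omega, by simp, rfl⟩
    · refine Or.inl ⟨b, by omega, ?_, rfl⟩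
      rw [self_sub_mod_eq_ite hb]
      split_ifs <;> omega
    · refine Or.inr ⟨b - 1, by omega, ?_, by omega⟩
      rw [self_sub_mod_eq_ite (by omega)]
      split_ifs <;> omega
  · rintro (⟨k, hk, rfl, rfl⟩ | ⟨k, hk, rfl, rfl⟩) <;>
    · refine ⟨⟨Nat.mod_lt _ (by omega), by omega⟩, ?_⟩
      rw [av_eq_zero_iff (Nat.mod_lt _ (by omega)) (by omega), self_sub_mod_eq_ite (by omega)]
      split_ifs <;> omega

lemma add_mod_eq_zero_of_mem_ParEven {N : ℕ} {p : ℕ × ℕ} (hp : p ∈ ParEven N) :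
    (p.1 + p.2) % N = 0 := by
  obtain ⟨k, hk, rfl⟩ := Finset.mem_image.1 hp
  rw [Finset.mem_range] at hk
  rw [Nat.mod_add_mod, Nat.sub_add_cancel (by omega), Nat.mod_self]

lemma add_mod_eq_one_of_mem_ParOdd {N : ℕ} (hN : 2 ≤ N) {p : ℕ × ℕ} (hp : p ∈ ParOdd N) :
    (p.1 + p.2) % N = 1 := by
  obtain ⟨k, hk, rfl⟩ := Finset.mem_image.1 hp
  rw [Finset.mem_range] at hk
  rw [Nat.mod_add_mod, ← add_assoc, Nat.sub_add_cancel (by omega), Nat.add_mod_left,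
    Nat.one_mod_eq_one.2 (by omega)]

theorem disjoint_ParEven_ParOdd {N : ℕ} (hN : 2 ≤ N) : Disjoint (ParEven N) (ParOdd N) :=
  Finset.disjoint_left.2 fun _ hEven hOdd => by
    have := add_mod_eq_one_of_mem_ParOdd hN hOdd
    rw [add_mod_eq_zero_of_mem_ParEven hEven] at this
    exact zero_ne_one this

lemma card_ParEven (N : ℕ) : (ParEven N).card = (N - 1) / 2 + 1 := by
  rw [ParEven, Finset.card_image_of_injective _ fun _ _ h => congrArg Prod.snd h,
    Finset.card_range]

lemma card_ParOdd (N : ℕ) : (ParOdd N).card = (N - 2) / 2 + 1 := by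
  rw [ParOdd, Finset.card_image_of_injective _
    fun _ _ h => Nat.succ_injective (congrArg Prod.snd h), Finset.card_range]

end Rhythm

open Rhythm in
/-- The set `Par_N = {(a,b) ∈ Z_N × Z_N : av(a,b) = 0}` of parental pairs of zero is exactly
the disjoint union of `{(⟨−k⟩_N, k) : 0 ≤ k ≤ ⌊(N−1)/2⌋}` and
`{(⟨−k⟩_N, k+1) : 0 ≤ k ≤ ⌊(N−2)/2⌋}`; in particular `Par_N` has exactly `N` elements. -/
theorem Par_structure (N : ℕ) (hN : 3 ≤ N) :
    Par N = (Finset.range ((N - 1) / 2 + 1)).image (fun k => ((N - k) % N, k)) ∪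
            (Finset.range ((N - 2) / 2 + 1)).image (fun k => ((N - k) % N, k + 1)) ∧
    Disjoint ((Finset.range ((N - 1) / 2 + 1)).image (fun k => ((N - k) % N, k)))
             ((Finset.range ((N - 2) / 2 + 1)).image (fun k => ((N - k) % N, k + 1))) ∧
    (Par N).card = N := by
  have hN2 : 2 ≤ N := by omega
  refine ⟨Par_eq_union hN2, disjoint_ParEven_ParOdd hN2, ?_⟩
  rw [Par_eq_union hN2, Finset.card_union_of_disjoint (disjoint_ParEven_ParOdd hN2), card_ParEven,
    card_ParOdd]
  omega
end
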